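/- Let A → B be a ring homomorphism, let C be a pseudo-integral closure of A in B, and let C' be an A-subalgebra with C ⊆ C' ⊆ B^ic which is finitely generated as an A-algebra. Then C' is also a pseudo-integral closure of A in B. -/

import Mathlib

/-!
Over `C'` the ring `B^ic` is still integral, and `C' → B^ic` is injective, so going up makes
`Spec(B^ic) → Spec(C')` surjective; injectivity, and surjectivity of the residue field maps,
are inherited from the factorisation `C → C' → B^ic` of the bijections given for `C`, while
residue field maps are field homomorphisms and hence injective. Finiteness of `C'` over `A`
is "integral + finite type".
-/

open IsLocalRing in
/-- The induced map on residue fields at a prime `q ⊆ B` and its preimage `φ⁻¹(q) ⊆ A`. -/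
noncomputable def residueFieldHom {A B : Type*} [CommRing A] [CommRing B] (φ : A →+* B)
    (q : Ideal B) [q.IsPrime] :
    ResidueField (Localization.AtPrime (q.comap φ)) →+* ResidueField (Localization.AtPrime q) :=
  letI := Localization.isLocalHom_localRingHom (q.comap φ) q φ rfl
  ResidueField.map (Localization.localRingHom (q.comap φ) q φ rfl)

/-- A pseudo-integral closure of `A` in `B`: an `A`-subalgebra `C` of the integral closure
`B^ic` of `A` in `B` which is finitely generated as an `A`-module and such that
`Spec(B^ic) → Spec(C)` is a bijection inducing isomorphisms on all residue fields. -/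
def IsPseudoIntegralClosure {A B : Type*} [CommRing A] [CommRing B] [Algebra A B]
    (C : Subalgebra A B) : Prop :=
  ∃ hle : C ≤ integralClosure A B,
    Module.Finite A C ∧
    Function.Bijective (PrimeSpectrum.comap (Subalgebra.inclusion hle).toRingHom) ∧
    ∀ (q : Ideal (integralClosure A B)) (_ : q.IsPrime),
      letI := ‹q.IsPrime›
      Function.Bijective (residueFieldHom (Subalgebra.inclusion hle).toRingHom q)

open IsLocalRing in
lemma residueFieldHom_comp {R S T : Type*} [CommRing R] [CommRing S] [CommRing T]
    (f : R →+* S) (g : S →+* T) (q : Ideal T) [q.IsPrime] :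
    residueFieldHom (g.comp f) q =
      (residueFieldHom g q).comp (residueFieldHom f (q.comap g)) := by
  refine Ideal.Quotient.ringHom_ext <| RingHom.ext fun x => congrArg (residue _) ?_
  exact RingHom.congr_fun (Localization.localRingHom_comp _ (q.comap g) q f rfl g rfl) x

lemma residueFieldHom_surjective_of_comp {R S T : Type*} [CommRing R] [CommRing S] [CommRing T]
    {f : R →+* S} {g : S →+* T} {q : Ideal T} [q.IsPrime]
    (h : Function.Surjective (residueFieldHom (g.comp f) q)) :
    Function.Surjective (residueFieldHom g q) := fun y =>
  let ⟨x, hx⟩ := h y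
  ⟨residueFieldHom f (q.comap g) x, by rw [← hx, residueFieldHom_comp]; rfl⟩

section
variable {A B : Type*} [CommRing A] [CommRing B] [Algebra A B]

lemma Subalgebra.isIntegral_of_le_integralClosure {C : Subalgebra A B}
    (h : C ≤ integralClosure A B) : Algebra.IsIntegral A C :=
  ⟨fun x => (isIntegral_algHom_iff C.val Subtype.val_injective).mp (h x.2)⟩

lemma Subalgebra.finite_of_fg_of_le_integralClosure {C : Subalgebra A B}
    (h : C ≤ integralClosure A B) (hfg : C.FG) : Module.Finite A C :=
  have := isIntegral_of_le_integralClosure h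
  Algebra.finite_iff_isIntegral_and_finiteType.mpr ⟨this, (Subalgebra.fg_iff_finiteType C).mp hfg⟩

lemma Subalgebra.isIntegral_inclusion_integralClosure {C : Subalgebra A B}
    (h : C ≤ integralClosure A B) : (Subalgebra.inclusion h).toRingHom.IsIntegral := by
  algebraize [(Subalgebra.inclusion h).toRingHom]
  intro x
  have : IsScalarTower A C (integralClosure A B) := IsScalarTower.of_algebraMap_eq fun _ => rfl
  exact (integralClosure.isIntegral x).tower_top

end

theorem isPseudoIntegralClosure_of_le_of_fg {A B : Type*} [CommRing A] [CommRing B]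
    [Algebra A B] {C C' : Subalgebra A B} (hC : IsPseudoIntegralClosure C)
    (hCC' : C ≤ C') (hC' : C' ≤ integralClosure A B) (hfg : C'.FG) :
    IsPseudoIntegralClosure C' := by
  obtain ⟨hle, -, hspec, hres⟩ := hC
  set f := (Subalgebra.inclusion hCC').toRingHom
  set g := (Subalgebra.inclusion hC').toRingHom
  refine ⟨hC', Subalgebra.finite_of_fg_of_le_integralClosure hC' hfg, ⟨?_, ?_⟩, fun q _ =>
    ⟨(residueFieldHom g q).injective, residueFieldHom_surjective_of_comp (f := f) (hres q _).2⟩⟩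
  · have hinj : Function.Injective (PrimeSpectrum.comap (g.comp f)) := hspec.injective
    rw [PrimeSpectrum.comap_comp] at hinj
    exact hinj.of_comp
  · exact (Subalgebra.isIntegral_inclusion_integralClosure hC').comap_surjective
      (Subalgebra.inclusion_injective hC')
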